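/- arXiv:1804.06181 — 4 statements merged into one kernel-verified Lean document; each statement's English description precedes it below -/
import Mathlib

section
/- Let g be a symmetric invertible 4×4 real matrix and T : Fin 4 → Fin 4 → Fin 4 → ℝ a tensor antisymmetric in its last two indices (T^α_{βγ} = -T^α_{γβ}). Then the conditions A_{αβγ} := Σ_ν (g_{βν} T^ν_{αγ} - g_{αν} T^ν_{βγ}) + (1/3) g_{βγ} Σ_ν T^ν_{να} - (1/3) g_{αγ} Σ_ν T^ν_{νβ} = 0 for all α, β, γ hold if and only if T^α_{βγ} = (1/3) δ^α_β Σ_ν T^ν_{νγ} - (1/3) δ^α_γ Σ_ν T^ν_{νβ} for all α, β, γ. -/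
/-!
Let `t_γ = ∑ ν, T^ν_{νγ}` and `S = T - V` with `V^α_{βγ} = k (δ^α_β t_γ - δ^α_γ t_β)`
(here `k = 1/3`). Lowering the upper index of `S` with `g` gives
`U_{βαγ} = ∑ ν, g_{βν} S^ν_{αγ}`, and for symmetric `g` the constraint is exactly
`A_{αβγ} = U_{βαγ} - U_{αβγ}`. So `A = 0` says that `U` is symmetric in its first two indices,
while `U` inherits antisymmetry in its last two from `T`; such a tensor vanishes, and since `g`
is invertible, `S = 0`. Conversely `S = 0` gives `U = 0` and hence `A = 0`.
-/

open Finset Matrix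

theorem eq_zero_of_symm_of_antisymm {ι M : Type*} [AddCommGroup M] [IsAddTorsionFree M]
    {U : ι → ι → ι → M} (hsymm : ∀ a b c, U a b c = U b a c)
    (hanti : ∀ a b c, U a b c = -U a c b) (a b c : ι) : U a b c = 0 := by
  refine self_eq_neg.mp ?_
  calc U a b c = -U a c b := hanti a b c
    _ = -U c a b := by rw [hsymm a c b]
    _ = U c b a := by rw [hanti c a b, neg_neg]
    _ = U b c a := hsymm c b a
    _ = -U b a c := hanti b c a
    _ = -U a b c := by rw [hsymm b a c]

namespace Torsion

variable {ι R : Type*} [Fintype ι] [CommRing R]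

def trace (T : ι → ι → ι → R) (γ : ι) : R := ∑ ν, T ν ν γ

def lowerIndex (g : Matrix ι ι R) (S : ι → ι → ι → R) (b a c : ι) : R :=
  (g *ᵥ fun ν => S ν a c) b

theorem lowerIndex_antisymm (g : Matrix ι ι R) {S : ι → ι → ι → R}
    (hS : ∀ α β γ, S α β γ = -S α γ β) (b a c : ι) :
    lowerIndex g S b a c = -lowerIndex g S b c a := by
  rw [lowerIndex, lowerIndex, ← Pi.neg_apply, ← mulVec_neg]
  exact congrArg (fun v => (g *ᵥ v) b) (funext fun ν => hS ν a c)

variable [DecidableEq ι]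

def vectorPart (k : R) (T : ι → ι → ι → R) (α β γ : ι) : R :=
  k * (if α = β then 1 else 0) * trace T γ - k * (if α = γ then 1 else 0) * trace T β

def constraint (g : Matrix ι ι R) (k : R) (T : ι → ι → ι → R) (α β γ : ι) : R :=
  (∑ ν, (g β ν * T ν α γ - g α ν * T ν β γ))
    + k * g β γ * trace T α - k * g α γ * trace T β

theorem sub_vectorPart_antisymm {T : ι → ι → ι → R}
    (hT : ∀ α β γ, T α β γ = -T α γ β) (k : R) (α β γ : ι) :
    (T - vectorPart k T) α β γ = -(T - vectorPart k T) α γ β := by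
  simp only [Pi.sub_apply, vectorPart, hT α β γ]
  ring

theorem mulVec_vectorPart (g : Matrix ι ι R) (k : R) (T : ι → ι → ι → R) (b a c : ι) :
    (g *ᵥ fun ν => vectorPart k T ν a c) b =
      k * g b a * trace T c - k * g b c * trace T a := by
  simp only [mulVec, dotProduct, vectorPart, mul_sub, sum_sub_distrib, mul_ite, mul_one,
    mul_zero, ite_mul, zero_mul, sum_ite_eq', mem_univ, if_true]
  ring

theorem constraint_eq_lowerIndex_sub {g : Matrix ι ι R} (hg : g.IsSymm) (k : R)
    (T : ι → ι → ι → R) (α β γ : ι) :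
    constraint g k T α β γ =
      lowerIndex g (T - vectorPart k T) β α γ - lowerIndex g (T - vectorPart k T) α β γ := by
  have hvec : ∀ b a c, lowerIndex g (T - vectorPart k T) b a c
      = (∑ ν, g b ν * T ν a c) - (k * g b a * trace T c - k * g b c * trace T a) := by
    intro b a c
    rw [← mulVec_vectorPart]
    simp only [lowerIndex, mulVec, dotProduct, Pi.sub_apply, mul_sub, sum_sub_distrib]
  rw [hvec, hvec, constraint, sum_sub_distrib, hg.apply α β]
  ring

theorem constraint_eq_zero_iff {g : Matrix ι ι R} (hg : g.IsSymm) (hdet : g.det ≠ 0)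
    [NoZeroDivisors R] [IsAddTorsionFree R] {T : ι → ι → ι → R}
    (hT : ∀ α β γ, T α β γ = -T α γ β) (k : R) :
    (∀ α β γ, constraint g k T α β γ = 0) ↔ ∀ α β γ, T α β γ = vectorPart k T α β γ := by
  simp only [constraint_eq_lowerIndex_sub hg, sub_eq_zero]
  constructor
  · intro hsymm α β γ
    have hU : ∀ b a c, lowerIndex g (T - vectorPart k T) b a c = 0 :=
      eq_zero_of_symm_of_antisymm (fun b a c => hsymm a b c)
        (lowerIndex_antisymm g (sub_vectorPart_antisymm hT k))
    have hS : (fun ν => (T - vectorPart k T) ν β γ) = 0 :=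
      eq_zero_of_mulVec_eq_zero hdet (funext fun b => hU b β γ)
    exact sub_eq_zero.mp (congrFun hS α)
  · intro hV α β γ
    have hS : ∀ a b c, T a b c - vectorPart k T a b c = 0 :=
      fun a b c => sub_eq_zero.mpr (hV a b c)
    simp [lowerIndex, hS, mulVec, dotProduct]

end Torsion

theorem stmt_0 (g : Matrix (Fin 4) (Fin 4) ℝ) (hg : g.IsSymm) (hdet : g.det ≠ 0)
    (T : Fin 4 → Fin 4 → Fin 4 → ℝ)
    (hT : ∀ α β γ, T α β γ = - T α γ β) :
    (∀ α β γ : Fin 4,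
      (∑ ν, (g β ν * T ν α γ - g α ν * T ν β γ))
        + (1/3) * g β γ * (∑ ν, T ν ν α) - (1/3) * g α γ * (∑ ν, T ν ν β) = 0)
    ↔ (∀ α β γ : Fin 4,
      T α β γ = (1/3) * (if α = β then (1:ℝ) else 0) * (∑ ν, T ν ν γ)
        - (1/3) * (if α = γ then (1:ℝ) else 0) * (∑ ν, T ν ν β)) :=
  Torsion.constraint_eq_zero_iff hg hdet hT (1/3)
end

section
/- Let g be a symmetric invertible 4×4 real matrix with inverse entries g^{αβ}, ϱ := √|det g|, and p_α^{βγ,μ} := ϱ (δ^μ_α g^{βγ} - δ^β_α g^{μγ}). Setting p^{αβ} := Σ_ν p_ν^{να,β}, the following identities hold for all α, β, γ, μ: (i) p_α^{βγ,μ} = (1/3) δ^β_α p^{μγ} - (1/3) δ^μ_α p^{βγ}; (ii) p^{αβ} = p^{βα}. -/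
/-! The trace `∑ ν, p_ν^{ν α, β}` of the momenta equals `(1 - n) ϱ g^{βα}`, so in dimension
`n = 4` it is `-3 ϱ g^{αβ}`: it is symmetric because `g⁻¹` is, and dividing by `-3` recovers
`ϱ g^{βγ}`, from which every `p_α^{βγ,μ}` is rebuilt. -/

open Finset

section ConnectionMomentum

variable {ι R : Type*} [Fintype ι] [DecidableEq ι] [CommRing R]

/-- `connectionMomentum ϱ h α β γ μ` is `p_α^{βγ,μ}`, with `h` in the role of `g⁻¹`. -/
def connectionMomentum (ϱ : R) (h : Matrix ι ι R) (α β γ μ : ι) : R :=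
  ϱ * ((if μ = α then (1 : R) else 0) * h β γ - (if β = α then (1 : R) else 0) * h μ γ)

theorem sum_connectionMomentum_diag (ϱ : R) (h : Matrix ι ι R) (α β : ι) :
    ∑ ν, connectionMomentum ϱ h ν ν α β = (1 - Fintype.card ι) * ϱ * h β α := by
  simp only [connectionMomentum, if_true, one_mul, ite_mul, zero_mul, ← mul_sum,
    sum_sub_distrib, sum_ite_eq, mem_univ, sum_const, card_univ, nsmul_eq_mul]
  ring

variable {h : Matrix ι ι R}

theorem sum_connectionMomentum_diag_comm (hh : h.IsSymm) (ϱ : R) (α β : ι) :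
    ∑ ν, connectionMomentum ϱ h ν ν α β = ∑ ν, connectionMomentum ϱ h ν ν β α := by
  rw [sum_connectionMomentum_diag, sum_connectionMomentum_diag, hh.apply α β]

theorem card_sub_one_mul_connectionMomentum (hh : h.IsSymm) (ϱ : R) (α β γ μ : ι) :
    (Fintype.card ι - 1) * connectionMomentum ϱ h α β γ μ =
      (if β = α then (1 : R) else 0) * ∑ ν, connectionMomentum ϱ h ν ν μ γ -
        (if μ = α then (1 : R) else 0) * ∑ ν, connectionMomentum ϱ h ν ν β γ := by
  rw [sum_connectionMomentum_diag, sum_connectionMomentum_diag, hh.apply β γ, hh.apply μ γ,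
    connectionMomentum]
  ring

end ConnectionMomentum

theorem stmt_6_general (g : Matrix (Fin 4) (Fin 4) ℝ) (hg : g.IsSymm)
    (ϱ : ℝ)
    (p : Fin 4 → Fin 4 → Fin 4 → Fin 4 → ℝ)
    (hp : ∀ α β γ μ, p α β γ μ =
      ϱ * ((if μ = α then (1:ℝ) else 0) * g⁻¹ β γ - (if β = α then (1:ℝ) else 0) * g⁻¹ μ γ))
    (P : Fin 4 → Fin 4 → ℝ)
    (hP : ∀ α β, P α β = ∑ ν, p ν ν α β) :
    (∀ α β γ μ, p α β γ μ =
      (1/3) * (if β = α then (1:ℝ) else 0) * P μ γ - (1/3) * (if μ = α then (1:ℝ) else 0) * P β γ) ∧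
    (∀ α β, P α β = P β α) := by
  obtain rfl : p = connectionMomentum ϱ g⁻¹ := by
    funext α β γ μ
    exact hp α β γ μ
  refine ⟨fun α β γ μ => ?_, fun α β => ?_⟩
  · have h := card_sub_one_mul_connectionMomentum hg.inv ϱ α β γ μ
    rw [Fintype.card_fin, ← hP, ← hP] at h
    linear_combination (1 / 3 : ℝ) * h
  · rw [hP, hP, sum_connectionMomentum_diag_comm hg.inv]

theorem stmt_6 (g : Matrix (Fin 4) (Fin 4) ℝ) (hg : g.IsSymm) (hdet : g.det ≠ 0)
    (ϱ : ℝ) (hϱ : ϱ = Real.sqrt |g.det|)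
    (p : Fin 4 → Fin 4 → Fin 4 → Fin 4 → ℝ)
    (hp : ∀ α β γ μ, p α β γ μ =
      ϱ * ((if μ = α then (1:ℝ) else 0) * g⁻¹ β γ - (if β = α then (1:ℝ) else 0) * g⁻¹ μ γ))
    (P : Fin 4 → Fin 4 → ℝ)
    (hP : ∀ α β, P α β = ∑ ν, p ν ν α β) :
    (∀ α β γ μ, p α β γ μ =
      (1/3) * (if β = α then (1:ℝ) else 0) * P μ γ - (1/3) * (if μ = α then (1:ℝ) else 0) * P β γ) ∧
    (∀ α β, P α β = P β α) :=
  stmt_6_general g hg ϱ p hp P hP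
end

section
/- Fix m ≥ 2 and functions-free algebraic data: a symmetric invertible m×m real matrix g (entries g_{ρσ}, inverse g^{μα}), a family D : Fin m → Fin m → Fin m → ℝ symmetric in its first two indices (D_{ρσ,μ} = D_{σρ,μ}, playing the role of ∂g_{ρσ}/∂x^μ), and C : Fin m → ℝ. Then there exists a unique Γ : Fin m → Fin m → Fin m → ℝ such that: (1) D_{ρσ,μ} - Σ_λ (g_{ρλ} Γ^λ_{μσ} + g_{σλ} Γ^λ_{μρ}) = (2/(m-1)) g_{ρσ} Σ_λ T^λ_{λμ}; (2) T^α_{βγ} = (1/(m-1)) δ^α_β Σ_λ T^λ_{λγ} - (1/(m-1)) δ^α_γ Σ_λ T^λ_{λβ}; (3) Σ_λ Γ^λ_{αλ} = C_α; where T^α_{βγ} := Γ^α_{βγ} - Γ^α_{γβ}. Moreover Γ is given explicitly by Γ^α_{ρσ} = (1/2) Σ_μ g^{μα}(D_{ρμ,σ} + D_{σμ,ρ} - D_{ρσ,μ}) - (1/(2m)) (Σ_{μ,ν} g^{μν} D_{μν,ρ}) δ^α_σ + (1/m) C_ρ δ^α_σ. -/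
/-- Conditions (1) pre-metricity, (2) torsion constraint, (3) trace gauge fixing
for a connection `Γ` relative to metric data `g`, metric derivatives `D` and gauge `C`. -/
def LCConds (m : ℕ) (g : Matrix (Fin m) (Fin m) ℝ)
    (D : Fin m → Fin m → Fin m → ℝ) (C : Fin m → ℝ)
    (Γ : Fin m → Fin m → Fin m → ℝ) : Prop :=
  (∀ ρ σ μ, D ρ σ μ - ∑ l, (g ρ l * Γ l μ σ + g σ l * Γ l μ ρ)
      = (2/((m:ℝ)-1)) * g ρ σ * ∑ l, ((Γ l l μ) - (Γ l μ l))) ∧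
  (∀ α β γ, (Γ α β γ - Γ α γ β)
      = (1/((m:ℝ)-1)) * (if α = β then (1:ℝ) else 0) * (∑ l, (Γ l l γ - Γ l γ l))
      - (1/((m:ℝ)-1)) * (if α = γ then (1:ℝ) else 0) * (∑ l, (Γ l l β - Γ l β l))) ∧
  (∀ α, ∑ l, Γ l α l = C α)

noncomputable section LCAux

variable {m : ℕ}

def Efun (g : Matrix (Fin m) (Fin m) ℝ) (D : Fin m → Fin m → Fin m → ℝ) (ρ : Fin m) : ℝ :=
  ∑ μ, ∑ ν, g⁻¹ μ ν * D μ ν ρ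

def Kfun (g : Matrix (Fin m) (Fin m) ℝ) (D : Fin m → Fin m → Fin m → ℝ) (α ρ σ : Fin m) : ℝ :=
  (1/2) * ∑ μ, g⁻¹ μ α * (D ρ μ σ + D σ μ ρ - D ρ σ μ)

def Wfun (g : Matrix (Fin m) (Fin m) ℝ) (D : Fin m → Fin m → Fin m → ℝ) (C : Fin m → ℝ)
    (ρ : Fin m) : ℝ :=
  (1/(2*(m:ℝ))) * Efun g D ρ - (1/(m:ℝ)) * C ρ

def Gam0 (g : Matrix (Fin m) (Fin m) ℝ) (D : Fin m → Fin m → Fin m → ℝ) (C : Fin m → ℝ)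
    (α ρ σ : Fin m) : ℝ :=
  Kfun g D α ρ σ - Wfun g D C ρ * (if α = σ then 1 else 0)

variable {g : Matrix (Fin m) (Fin m) ℝ}

lemma hinvs (hg : g.IsSymm) (i j : Fin m) : g⁻¹ i j = g⁻¹ j i := by
  have hs : g⁻¹.IsSymm := by
    unfold Matrix.IsSymm
    rw [Matrix.transpose_nonsing_inv, hg.eq]
  exact (hs.apply i j).symm

lemma hgl (hdet : IsUnit g.det) (i j : Fin m) :
    ∑ k, g i k * g⁻¹ k j = if i = j then 1 else 0 := by
  have h1 : g * g⁻¹ = 1 := Matrix.mul_nonsing_inv g hdet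
  have := congrFun (congrFun h1 i) j
  simpa [Matrix.mul_apply, Matrix.one_apply] using this

lemma hgr (hdet : IsUnit g.det) (i j : Fin m) :
    ∑ k, g⁻¹ i k * g k j = if i = j then 1 else 0 := by
  have h2 : g⁻¹ * g = 1 := Matrix.nonsing_inv_mul g hdet
  have := congrFun (congrFun h2 i) j
  simpa [Matrix.mul_apply, Matrix.one_apply] using this

lemma contract1 (hg : g.IsSymm) (hdet : IsUnit g.det) (f : Fin m → ℝ) (x : Fin m) :
    ∑ l, g x l * ∑ ν, g⁻¹ ν l * f ν = f x := by
  have h1 : ∀ l, g x l * ∑ ν, g⁻¹ ν l * f ν = ∑ ν, g x l * g⁻¹ l ν * f ν := by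
    intro l
    rw [Finset.mul_sum]
    exact Finset.sum_congr rfl fun ν _ => by rw [hinvs hg ν l]; ring
  simp_rw [h1]
  rw [Finset.sum_comm]
  have h2 : ∀ ν, ∑ l, g x l * g⁻¹ l ν * f ν = (if x = ν then (1:ℝ) else 0) * f ν := by
    intro ν
    rw [← Finset.sum_mul, hgl hdet]
  simp_rw [h2]
  simp

lemma contract2 (hg : g.IsSymm) (hdet : IsUnit g.det) (f : Fin m → ℝ) (x : Fin m) :
    ∑ μ, g⁻¹ μ x * ∑ l, g μ l * f l = f x := by
  have h1 : ∀ μ, g⁻¹ μ x * ∑ l, g μ l * f l = ∑ l, g⁻¹ x μ * g μ l * f l := by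
    intro μ
    rw [Finset.mul_sum]
    exact Finset.sum_congr rfl fun l _ => by rw [hinvs hg μ x]; ring
  simp_rw [h1]
  rw [Finset.sum_comm]
  have h2 : ∀ l, ∑ μ, g⁻¹ x μ * g μ l * f l = (if x = l then (1:ℝ) else 0) * f l := by
    intro l
    rw [← Finset.sum_mul, hgr hdet]
  simp_rw [h2]
  simp

lemma hdelta (hdet : IsUnit g.det) (x y : Fin m) :
    ∑ μ, g⁻¹ μ x * g y μ = if y = x then (1:ℝ) else 0 := by
  have h : ∀ μ, g⁻¹ μ x * g y μ = g y μ * g⁻¹ μ x := fun μ => by ring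
  simp_rw [h]
  exact hgl hdet y x

lemma Ksym {D : Fin m → Fin m → Fin m → ℝ} (hD : ∀ ρ σ μ, D ρ σ μ = D σ ρ μ)
    (α ρ σ : Fin m) : Kfun g D α ρ σ = Kfun g D α σ ρ := by
  unfold Kfun
  congr 1
  exact Finset.sum_congr rfl fun ν _ => by rw [hD ρ σ ν]; ring

lemma trK (hg : g.IsSymm) {D : Fin m → Fin m → Fin m → ℝ} (α : Fin m) :
    ∑ l, Kfun g D l α l = Efun g D α / 2 := by
  have expand : ∑ l, Kfun g D l α l
      = (1/2) * ((∑ l, ∑ ν, g⁻¹ ν l * D α ν l) + (∑ l, ∑ ν, g⁻¹ ν l * D l ν α)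
          - (∑ l, ∑ ν, g⁻¹ ν l * D α l ν)) := by
    unfold Kfun
    rw [← Finset.mul_sum]
    congr 1
    rw [← Finset.sum_add_distrib, ← Finset.sum_sub_distrib]
    refine Finset.sum_congr rfl fun l _ => ?_
    rw [← Finset.sum_add_distrib, ← Finset.sum_sub_distrib]
    exact Finset.sum_congr rfl fun ν _ => by ring
  have h3 : (∑ l, ∑ ν, g⁻¹ ν l * D α l ν) = ∑ l, ∑ ν, g⁻¹ ν l * D α ν l := by
    rw [Finset.sum_comm]
    exact Finset.sum_congr rfl fun a _ => Finset.sum_congr rfl fun b _ => by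
      rw [hinvs hg a b]
  have h2 : (∑ l, ∑ ν, g⁻¹ ν l * D l ν α) = Efun g D α := by
    unfold Efun
    exact Finset.sum_congr rfl fun a _ => Finset.sum_congr rfl fun b _ => by
      rw [hinvs hg b a]
  rw [expand, h3, h2]
  ring

/-- `∑ l, g x l * Γ₀ l y z` in closed form. -/
lemma sumG (hg : g.IsSymm) (hdet : IsUnit g.det)
    {D : Fin m → Fin m → Fin m → ℝ} {C : Fin m → ℝ} (x y z : Fin m) :
    ∑ l, g x l * Gam0 g D C l y z
      = (1/2)*(D y x z + D z x y - D y z x) - Wfun g D C y * g x z := by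
  unfold Gam0
  have split : ∑ l, g x l * (Kfun g D l y z - Wfun g D C y * (if l = z then 1 else 0))
      = (∑ l, g x l * Kfun g D l y z)
        - ∑ l, g x l * (Wfun g D C y * (if l = z then 1 else 0)) := by
    rw [← Finset.sum_sub_distrib]
    exact Finset.sum_congr rfl fun l _ => by ring
  rw [split]
  have hK : ∑ l, g x l * Kfun g D l y z = (1/2)*(D y x z + D z x y - D y z x) := by
    unfold Kfun
    have step : ∑ l, g x l * ((1/2) * ∑ ν, g⁻¹ ν l * (D y ν z + D z ν y - D y z ν))
        = (1/2) * ∑ l, g x l * ∑ ν, g⁻¹ ν l * (D y ν z + D z ν y - D y z ν) := by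
      rw [Finset.mul_sum]
      exact Finset.sum_congr rfl fun l _ => by ring
    rw [step, contract1 hg hdet (fun ν => D y ν z + D z ν y - D y z ν) x]
  have hW : ∑ l, g x l * (Wfun g D C y * (if l = z then 1 else 0))
      = Wfun g D C y * g x z := by
    simp [mul_ite, Finset.sum_ite_eq']
    ring
  rw [hK, hW]

/-- torsion of Γ₀. -/
lemma torsG {D : Fin m → Fin m → Fin m → ℝ} {C : Fin m → ℝ}
    (hD : ∀ ρ σ μ, D ρ σ μ = D σ ρ μ) (α β γ : Fin m) :
    Gam0 g D C α β γ - Gam0 g D C α γ β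
      = Wfun g D C γ * (if α = β then 1 else 0) - Wfun g D C β * (if α = γ then 1 else 0) := by
  unfold Gam0
  rw [Ksym hD α β γ]
  ring

lemma sumTorsG {D : Fin m → Fin m → Fin m → ℝ} {C : Fin m → ℝ}
    (hD : ∀ ρ σ μ, D ρ σ μ = D σ ρ μ) (μ : Fin m) :
    ∑ l, (Gam0 g D C l l μ - Gam0 g D C l μ l) = ((m:ℝ) - 1) * Wfun g D C μ := by
  have step : ∀ l, Gam0 g D C l l μ - Gam0 g D C l μ l
      = Wfun g D C μ - Wfun g D C l * (if l = μ then 1 else 0) := by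
    intro l
    have := torsG (g := g) (C := C) hD l l μ
    simpa using this
  simp_rw [step]
  rw [Finset.sum_sub_distrib, Finset.sum_const, Finset.card_univ, Fintype.card_fin]
  simp [ite_mul, Finset.sum_ite_eq']
  ring

lemma traceG (hg : g.IsSymm) {D : Fin m → Fin m → Fin m → ℝ} {C : Fin m → ℝ} (α : Fin m) :
    ∑ l, Gam0 g D C l α l = Efun g D α / 2 - (m:ℝ) * Wfun g D C α := by
  have step : ∀ l : Fin m, Gam0 g D C l α l = Kfun g D l α l - Wfun g D C α := by
    intro l; simp [Gam0]
  simp_rw [step]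
  rw [Finset.sum_sub_distrib, Finset.sum_const, Finset.card_univ, Fintype.card_fin,
    trK hg]
  ring

end LCAux

noncomputable section LCMain

variable {m : ℕ} {g : Matrix (Fin m) (Fin m) ℝ}

lemma conds_Gam0 (hm : 2 ≤ m) (hg : g.IsSymm) (hdet : IsUnit g.det)
    {D : Fin m → Fin m → Fin m → ℝ} (hD : ∀ ρ σ μ, D ρ σ μ = D σ ρ μ) (C : Fin m → ℝ) :
    LCConds m g D C (Gam0 g D C) := by
  have hm2 : (2:ℝ) ≤ (m:ℝ) := by exact_mod_cast hm
  have hm1 : (m:ℝ) - 1 ≠ 0 := by linarith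
  have hm0 : (m:ℝ) ≠ 0 := by linarith
  refine ⟨?_, ?_, ?_⟩
  · intro ρ σ μ
    rw [Finset.sum_add_distrib, sumG hg hdet ρ μ σ, sumG hg hdet σ μ ρ, sumTorsG hD μ]
    have e : (2/((m:ℝ)-1)) * g ρ σ * (((m:ℝ)-1) * Wfun g D C μ)
        = 2 * g ρ σ * Wfun g D C μ := by
      field_simp
    rw [e]
    linear_combination (-1/2 : ℝ) * hD σ ρ μ + Wfun g D C μ * hg.apply ρ σ
  · intro α β γ
    rw [torsG hD α β γ, sumTorsG hD β, sumTorsG hD γ]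
    by_cases hab : α = β <;> by_cases hag : α = γ <;> by_cases hbg : β = γ <;>
      simp only [hab, hag, if_true, if_neg, ite_true, ite_false] <;>
      simp_all <;> field_simp <;> ring
  · intro α
    rw [traceG hg α]
    unfold Wfun
    field_simp
    ring

lemma conds_unique (hm : 2 ≤ m) (hg : g.IsSymm) (hdet : IsUnit g.det)
    {D : Fin m → Fin m → Fin m → ℝ} (hD : ∀ ρ σ μ, D ρ σ μ = D σ ρ μ) {C : Fin m → ℝ}
    {Γ : Fin m → Fin m → Fin m → ℝ} (h : LCConds m g D C Γ) (α ρ σ : Fin m) :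
    Γ α ρ σ = Gam0 g D C α ρ σ := by
  obtain ⟨h1, h2, h3⟩ := h
  have hm2 : (2:ℝ) ≤ (m:ℝ) := by exact_mod_cast hm
  have hm1 : (m:ℝ) - 1 ≠ 0 := by linarith
  have hm0 : (m:ℝ) ≠ 0 := by linarith
  -- contracted torsion identity
  have hsum1 : ∀ x y z : Fin m, (∑ l, g x l * Γ l y z) - (∑ l, g x l * Γ l z y)
      = (1/((m:ℝ)-1)) * (g x y * (∑ l, (Γ l l z - Γ l z l))
          - g x z * (∑ l, (Γ l l y - Γ l y l))) := by
    intro x y z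
    rw [← Finset.sum_sub_distrib]
    have step : ∀ l, g x l * Γ l y z - g x l * Γ l z y
        = (1/((m:ℝ)-1)) * (∑ l, (Γ l l z - Γ l z l)) * (g x l * (if l = y then 1 else 0))
          - (1/((m:ℝ)-1)) * (∑ l, (Γ l l y - Γ l y l)) * (g x l * (if l = z then 1 else 0)) := by
      intro l
      linear_combination g x l * h2 l y z
    simp_rw [step]
    rw [Finset.sum_sub_distrib]
    have e1 : ∀ (c : ℝ) (u : Fin m),
        ∑ l, c * (g x l * (if l = u then (1:ℝ) else 0)) = c * g x u := by
      intro c u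
      simp [mul_ite, Finset.sum_ite_eq']
    rw [e1, e1]
    ring
  -- Koszul-type identity
  have key : ∀ μ ρ σ : Fin m, 2 * (∑ l, g μ l * Γ l σ ρ)
      = D ρ μ σ + D σ μ ρ - D ρ σ μ
        - (2/((m:ℝ)-1)) * g ρ μ * (∑ l, (Γ l l σ - Γ l σ l)) := by
    intro μ ρ σ
    have e1 := h1 ρ μ σ
    have e2 := h1 σ μ ρ
    have e3 := h1 ρ σ μ
    rw [Finset.sum_add_distrib] at e1 e2 e3
    have t1 := hsum1 ρ σ μ
    have t2 := hsum1 σ ρ μ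
    have t3 := hsum1 μ ρ σ
    linear_combination (-1 : ℝ) * e1 - e2 + e3 - t1 - t2 - t3
      + (1/((m:ℝ)-1)) * (∑ l, (Γ l l σ - Γ l σ l)) * hg.apply μ ρ
      - (1/((m:ℝ)-1)) * (∑ l, (Γ l l ρ - Γ l ρ l)) * hg.apply μ σ
      + (1/((m:ℝ)-1)) * (∑ l, (Γ l l μ - Γ l μ l)) * hg.apply σ ρ
  -- solve for Γ by contracting with g⁻¹
  have hGam : ∀ a b c : Fin m, Γ a c b
      = (1/2) * (∑ μ, g⁻¹ μ a * (D b μ c + D c μ b - D b c μ))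
        - (1/((m:ℝ)-1)) * (∑ l, (Γ l l c - Γ l c l)) * (if b = a then 1 else 0) := by
    intro a b c
    have base := contract2 hg hdet (fun l => Γ l c b) a
    rw [show Γ a c b = ∑ μ, g⁻¹ μ a * ∑ l, g μ l * Γ l c b from base.symm]
    have step : ∀ μ : Fin m, g⁻¹ μ a * (∑ l, g μ l * Γ l c b)
        = (1/2) * (g⁻¹ μ a * (D b μ c + D c μ b - D b c μ))
          - (1/((m:ℝ)-1)) * (∑ l, (Γ l l c - Γ l c l)) * (g⁻¹ μ a * g b μ) := by
      intro μ
      linear_combination (g⁻¹ μ a / 2) * key μ b c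
    calc ∑ μ, g⁻¹ μ a * ∑ l, g μ l * Γ l c b
        = ∑ μ, ((1/2) * (g⁻¹ μ a * (D b μ c + D c μ b - D b c μ))
            - (1/((m:ℝ)-1)) * (∑ l, (Γ l l c - Γ l c l)) * (g⁻¹ μ a * g b μ)) :=
          Finset.sum_congr rfl fun μ _ => step μ
      _ = (1/2) * (∑ μ, g⁻¹ μ a * (D b μ c + D c μ b - D b c μ))
            - (1/((m:ℝ)-1)) * (∑ l, (Γ l l c - Γ l c l)) * (∑ μ, g⁻¹ μ a * g b μ) := by
          rw [Finset.sum_sub_distrib, ← Finset.mul_sum, ← Finset.mul_sum]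
      _ = (1/2) * (∑ μ, g⁻¹ μ a * (D b μ c + D c μ b - D b c μ))
            - (1/((m:ℝ)-1)) * (∑ l, (Γ l l c - Γ l c l)) * (if b = a then 1 else 0) := by
          rw [hdelta hdet a b]
  -- determine the contracted torsion from the trace condition
  have hV : ∀ x : Fin m, (1/((m:ℝ)-1)) * (∑ l, (Γ l l x - Γ l x l))
      = (1/(2*(m:ℝ))) * Efun g D x - (1/(m:ℝ)) * C x := by
    intro x
    have step : ∀ l : Fin m, Γ l x l
        = Kfun g D l x l - (1/((m:ℝ)-1)) * (∑ l, (Γ l l x - Γ l x l)) := by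
      intro l
      rw [hGam l l x]
      have hone : (if (l : Fin m) = l then (1:ℝ) else 0) = 1 := if_pos rfl
      have e : (∑ μ, g⁻¹ μ l * (D l μ x + D x μ l - D l x μ))
          = ∑ μ, g⁻¹ μ l * (D x μ l + D l μ x - D x l μ) :=
        Finset.sum_congr rfl fun μ _ => by rw [hD l x μ]; ring
      rw [hone, mul_one, e]
      rfl
    have tr : ∑ l, Γ l x l
        = Efun g D x / 2 - (m:ℝ) * ((1/((m:ℝ)-1)) * (∑ l, (Γ l l x - Γ l x l))) := by
      rw [show (∑ l, Γ l x l)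
          = ∑ l, (Kfun g D l x l - (1/((m:ℝ)-1)) * (∑ l, (Γ l l x - Γ l x l))) from
        Finset.sum_congr rfl fun l _ => step l]
      rw [Finset.sum_sub_distrib, Finset.sum_const, Finset.card_univ, Fintype.card_fin,
        trK hg]
      ring
    have h3x := h3 x
    rw [tr] at h3x
    have e : (1/((m:ℝ)-1)) * (∑ l, (Γ l l x - Γ l x l))
        = (Efun g D x / 2 - C x) / (m:ℝ) := by
      rw [eq_div_iff hm0]
      linarith [h3x]
    rw [e]
    field_simp
  -- finish
  rw [hGam α σ ρ]
  have e1 : (∑ μ, g⁻¹ μ α * (D σ μ ρ + D ρ μ σ - D σ ρ μ))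
      = ∑ μ, g⁻¹ μ α * (D ρ μ σ + D σ μ ρ - D ρ σ μ) :=
    Finset.sum_congr rfl fun μ _ => by rw [hD σ ρ μ]; ring
  rw [e1, hV ρ]
  have e2 : (if σ = α then (1:ℝ) else 0) = (if α = σ then 1 else 0) := by
    by_cases hc : α = σ <;> simp [hc, eq_comm]
  rw [e2]
  unfold Gam0 Kfun Wfun
  ring

end LCMain

theorem stmt_10 (m : ℕ) (hm : 2 ≤ m)
    (g : Matrix (Fin m) (Fin m) ℝ) (hg : g.IsSymm) (hdet : IsUnit g.det)
    (D : Fin m → Fin m → Fin m → ℝ) (hD : ∀ ρ σ μ, D ρ σ μ = D σ ρ μ)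
    (C : Fin m → ℝ) :
    (∃! Γ : Fin m → Fin m → Fin m → ℝ, LCConds m g D C Γ) ∧
    (∀ Γ : Fin m → Fin m → Fin m → ℝ, LCConds m g D C Γ →
      ∀ α ρ σ, Γ α ρ σ
        = (1/2) * (∑ μ, g⁻¹ μ α * (D ρ μ σ + D σ μ ρ - D ρ σ μ))
        - (1/(2*(m:ℝ))) * (∑ μ, ∑ ν, g⁻¹ μ ν * D μ ν ρ) * (if α = σ then (1:ℝ) else 0)
        + (1/(m:ℝ)) * C ρ * (if α = σ then (1:ℝ) else 0)) := by
  constructor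
  · refine ⟨Gam0 g D C, conds_Gam0 hm hg hdet hD C, fun Γ h => ?_⟩
    funext α ρ σ
    exact conds_unique hm hg hdet hD h α ρ σ
  · intro Γ h α ρ σ
    rw [conds_unique hm hg hdet hD h α ρ σ]
    unfold Gam0 Kfun Wfun Efun
    ring
end

section
/- Let g be a symmetric invertible 4×4 real matrix with inverse entries g^{αβ}, and ϱ := √|det g| ≠ 0. Let f : Fin 4 → Fin 4 → Fin 4 → ℝ satisfy, for all α, β, γ: f^α_{βγ} + f^α_{γβ} = δ^α_γ Σ_r f^r_{rβ} + δ^α_β Σ_r f^r_{rγ} + (Σ_{r,s} f^α_{rs} g^{rs} - Σ_{r,s} f^r_{rs} g^{αs}) g_{βγ}. Define C_γ := Σ_ν f^ν_{νγ} and K^α_{βγ} := f^α_{βγ} - C_β δ^α_γ. Then Σ_α K^α_{αγ} = 0 for all γ, and K^α_{βγ} + K^α_{γβ} = 0 for all α, β, γ; that is, every solution decomposes as a trace solution plus an antisymmetric (torsion) solution. -/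
/-!
Contracting the equation with the symmetric `g⁻¹` turns its left side into `2A` and its right
side into `2B + n (A - B)`, where `A = f^α_{rs} g^{rs}`, `B = f^r_{rs} g^{αs}` and `n = 4` is
the trace of `g g⁻¹`. As `n ≠ 2`, `A = B`, so the metric term drops out and the symmetric part
of `f` is exactly that of the trace solution `C_β δ^α_γ`.
-/

variable {𝕜 n : Type*} [Field 𝕜] [Fintype n] [DecidableEq n]

theorem Matrix.IsSymm.sum_sum_mul_inv_apply {g : Matrix n n 𝕜} (hg : g.IsSymm)
    (hdet : IsUnit g.det) : ∑ β, ∑ γ, g β γ * g⁻¹ β γ = Fintype.card n := by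
  have htrace := congrArg Matrix.trace (g.mul_nonsing_inv hdet)
  simp only [Matrix.trace, Matrix.diag, Matrix.mul_apply, Matrix.one_apply_eq,
    Finset.sum_const, Finset.card_univ, nsmul_eq_mul, mul_one] at htrace
  simpa only [hg.inv.apply] using htrace

omit [DecidableEq n] in
theorem Matrix.IsSymm.sum_sum_add_swap_mul {M : Matrix n n 𝕜} (hM : M.IsSymm) (T : n → n → 𝕜) :
    ∑ β, ∑ γ, (T β γ + T γ β) * M β γ = 2 * ∑ β, ∑ γ, T β γ * M β γ := by
  have hswap : ∑ β, ∑ γ, T γ β * M β γ = ∑ β, ∑ γ, T β γ * M β γ := by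
    rw [Finset.sum_comm]
    simp_rw [hM.apply]
  simp only [add_mul, Finset.sum_add_distrib, hswap]
  ring

def IsPalatiniGaugeVariation (g : Matrix n n 𝕜) (f : n → n → n → 𝕜) : Prop :=
  ∀ α β γ, f α β γ + f α γ β
    = (if α = γ then (1:𝕜) else 0) * (∑ r, f r r β)
    + (if α = β then (1:𝕜) else 0) * (∑ r, f r r γ)
    + ((∑ r, ∑ s, f α r s * g⁻¹ r s) - (∑ r, ∑ s, f r r s * g⁻¹ α s)) * g β γ

namespace IsPalatiniGaugeVariation

variable {g : Matrix n n 𝕜} {f : n → n → n → 𝕜}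

theorem trace_contraction_eq (hf : IsPalatiniGaugeVariation g f) (hg : g.IsSymm)
    (hdet : IsUnit g.det) (hn : (Fintype.card n : 𝕜) ≠ 2) (α : n) :
    ∑ r, ∑ s, f α r s * g⁻¹ r s = ∑ r, ∑ s, f r r s * g⁻¹ α s := by
  set A := ∑ r, ∑ s, f α r s * g⁻¹ r s
  set B := ∑ r, ∑ s, f r r s * g⁻¹ α s
  have hB : ∑ s, (∑ r, f r r s) * g⁻¹ α s = B := by
    simp only [B, Finset.sum_mul]
    exact Finset.sum_comm
  have hcontract : ∑ β, ∑ γ, (f α β γ + f α γ β) * g⁻¹ β γ = ∑ β, ∑ γ,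
      ((if α = γ then (1:𝕜) else 0) * (∑ r, f r r β)
        + (if α = β then (1:𝕜) else 0) * (∑ r, f r r γ) + (A - B) * g β γ) * g⁻¹ β γ :=
    Finset.sum_congr rfl fun β _ => Finset.sum_congr rfl fun γ _ => by rw [hf α β γ]
  rw [hg.inv.sum_sum_add_swap_mul (f α)] at hcontract
  simp only [add_mul, Finset.sum_add_distrib, ite_mul, one_mul, zero_mul, Finset.sum_ite_eq,
    Finset.sum_ite_irrel, Finset.sum_const_zero, Finset.mem_univ, if_true, mul_assoc,
    ← Finset.mul_sum, hg.sum_sum_mul_inv_apply hdet, hg.inv.apply] at hcontract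
  rw [hB] at hcontract
  have hAB : ((Fintype.card n : 𝕜) - 2) * (A - B) = 0 := by linear_combination -hcontract
  simpa [sub_eq_zero, hn] using hAB

theorem add_swap_eq (hf : IsPalatiniGaugeVariation g f) (hg : g.IsSymm) (hdet : IsUnit g.det)
    (hn : (Fintype.card n : 𝕜) ≠ 2) (α β γ : n) :
    f α β γ + f α γ β = (if α = γ then (1:𝕜) else 0) * (∑ r, f r r β)
      + (if α = β then (1:𝕜) else 0) * (∑ r, f r r γ) := by
  simpa [hf.trace_contraction_eq hg hdet hn α] using hf α β γ

end IsPalatiniGaugeVariation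

theorem stmt_12_general (g : Matrix (Fin 4) (Fin 4) ℝ) (hg : g.IsSymm) (hdet : g.det ≠ 0)
    (f : Fin 4 → Fin 4 → Fin 4 → ℝ)
    (hf : ∀ α β γ, f α β γ + f α γ β
      = (if α = γ then (1:ℝ) else 0) * (∑ r, f r r β)
      + (if α = β then (1:ℝ) else 0) * (∑ r, f r r γ)
      + ((∑ r, ∑ s, f α r s * g⁻¹ r s) - (∑ r, ∑ s, f r r s * g⁻¹ α s)) * g β γ)
    (C : Fin 4 → ℝ) (hC : ∀ γ, C γ = ∑ ν, f ν ν γ)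
    (K : Fin 4 → Fin 4 → Fin 4 → ℝ)
    (hK : ∀ α β γ, K α β γ = f α β γ - C β * (if α = γ then (1:ℝ) else 0)) :
    (∀ γ, ∑ α, K α α γ = 0) ∧ (∀ α β γ, K α β γ + K α γ β = 0) := by
  have hsymm := IsPalatiniGaugeVariation.add_swap_eq hf hg hdet.isUnit (by norm_num)
  refine ⟨fun γ => ?_, fun α β γ => ?_⟩
  · simp [hK, hC]
  · simp only [hK, hC]
    linear_combination hsymm α β γ

theorem stmt_12 (g : Matrix (Fin 4) (Fin 4) ℝ) (hg : g.IsSymm) (hdet : g.det ≠ 0)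
    (ϱ : ℝ) (hϱ : ϱ = Real.sqrt |g.det|) (hϱ0 : ϱ ≠ 0)
    (f : Fin 4 → Fin 4 → Fin 4 → ℝ)
    (hf : ∀ α β γ, f α β γ + f α γ β
      = (if α = γ then (1:ℝ) else 0) * (∑ r, f r r β)
      + (if α = β then (1:ℝ) else 0) * (∑ r, f r r γ)
      + ((∑ r, ∑ s, f α r s * g⁻¹ r s) - (∑ r, ∑ s, f r r s * g⁻¹ α s)) * g β γ)
    (C : Fin 4 → ℝ) (hC : ∀ γ, C γ = ∑ ν, f ν ν γ)
    (K : Fin 4 → Fin 4 → Fin 4 → ℝ)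
    (hK : ∀ α β γ, K α β γ = f α β γ - C β * (if α = γ then (1:ℝ) else 0)) :
    (∀ γ, ∑ α, K α α γ = 0) ∧ (∀ α β γ, K α β γ + K α γ β = 0) :=
  stmt_12_general g hg hdet f hf C hC K hK
end
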